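/- arXiv:2206.05530 — 2 statements merged into one kernel-verified Lean document; each statement's English description precedes it below -/
import Mathlib

section
/- Let N ≥ 2 and let h_1,...,h_N be vectors in R^M with equal norms forming an orthogonal system, and let h = (1/N)∑ h_n be their mean. Then for all m ≠ n, ‖h_m − h‖ = ‖h_n − h‖ and the inner product ⟨(h_m − h)/‖h_m − h‖, (h_n − h)/‖h_n − h‖⟩ = −1/(N−1). -/
open scoped RealInnerProductSpace
open Finset

/-- Centered class means of an equinorm orthogonal system form a simplex ETF. -/
theorem stmt0 {M N : ℕ} (hN : 2 ≤ N) (h : Fin N → EuclideanSpace ℝ (Fin M))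
    (horth : ∀ m n : Fin N, m ≠ n → ⟪h m, h n⟫ = 0)
    (hnorm : ∀ m n : Fin N, ‖h m‖ = ‖h n‖)
    (hne : ∀ n : Fin N, h n ≠ 0)
    (hbar : EuclideanSpace ℝ (Fin M))
    (hbar_def : hbar = (N : ℝ)⁻¹ • ∑ n : Fin N, h n) :
    ∀ m n : Fin N, m ≠ n →
      ‖h m - hbar‖ = ‖h n - hbar‖ ∧
      ⟪(‖h m - hbar‖)⁻¹ • (h m - hbar), (‖h n - hbar‖)⁻¹ • (h n - hbar)⟫
        = -1 / ((N : ℝ) - 1) := by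
  have hNpos : (0:ℝ) < N := by positivity
  have hN1 : (1:ℝ) ≤ (N:ℝ) - 1 := by
    have : (2:ℝ) ≤ N := by exact_mod_cast hN
    linarith
  set c : ℝ := ‖h ⟨0, by omega⟩‖^2 with hc
  have hcpos : 0 < c := by
    have := norm_pos_iff.mpr (hne ⟨0, by omega⟩)
    positivity
  have hck : ∀ k, ‖h k‖^2 = c := fun k => by
    rw [hc, hnorm k ⟨0, by omega⟩]
  have key : ∀ k, ⟪h k, hbar⟫ = (N : ℝ)⁻¹ * c := by
    intro k
    rw [hbar_def, inner_smul_right, inner_sum]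
    congr 1
    rw [Finset.sum_eq_single k]
    · rw [real_inner_self_eq_norm_sq, hck]
    · intro b _ hb
      exact horth k b (Ne.symm hb)
    · intro hk; exact absurd (Finset.mem_univ k) hk
  have key2 : ∀ k, ⟪hbar, h k⟫ = (N : ℝ)⁻¹ * c := fun k => by
    rw [real_inner_comm]; exact key k
  have keybb : ⟪hbar, hbar⟫ = (N : ℝ)⁻¹ * c := by
    nth_rewrite 1 [hbar_def]
    rw [inner_smul_left, sum_inner]
    simp only [RCLike.star_def, conj_trivial]
    rw [Finset.sum_congr rfl (fun k _ => key k)]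
    rw [Finset.sum_const, Finset.card_univ, Fintype.card_fin, nsmul_eq_mul]
    field_simp
  have expand : ∀ m n : Fin N, ⟪h m - hbar, h n - hbar⟫
      = ⟪h m, h n⟫ - (N : ℝ)⁻¹ * c := by
    intro m n
    rw [inner_sub_left, inner_sub_right, inner_sub_right, key m, key2 n, keybb]
    ring
  have normsq : ∀ m : Fin N, ‖h m - hbar‖^2 = c * (1 - (N:ℝ)⁻¹) := by
    intro m
    rw [← real_inner_self_eq_norm_sq, expand m m, real_inner_self_eq_norm_sq, hck]
    ring
  have hpos' : 0 < c * (1 - (N:ℝ)⁻¹) := by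
    have : (N:ℝ)⁻¹ < 1 := by
      rw [inv_lt_one_iff₀]; right; linarith
    have : 0 < 1 - (N:ℝ)⁻¹ := by linarith
    positivity
  have hnormeq : ∀ m : Fin N, ‖h m - hbar‖ = Real.sqrt (c * (1 - (N:ℝ)⁻¹)) := by
    intro m
    rw [← normsq m, Real.sqrt_sq (norm_nonneg _)]
  intro m n hmn
  refine ⟨by rw [hnormeq m, hnormeq n], ?_⟩
  rw [inner_smul_left, inner_smul_right, expand m n, horth m n hmn,
    hnormeq m, hnormeq n]
  simp only [RCLike.star_def, conj_trivial]
  rw [← mul_assoc, ← mul_inv, Real.mul_self_sqrt hpos'.le]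
  have h1 : (N:ℝ) - 1 ≠ 0 := by linarith
  field_simp
  ring
end

section
/- Let K, N ∈ ℕ, N ≥ 2, and let w_1,...,w_N ∈ R^M and h_n^{(k)} ∈ R^M for n ∈ [N], k ∈ [K] with all h_n^{(k)} entrywise nonnegative. Define P := (1/(KN(N−1))) ∑_{k=1}^K ∑_{n=1}^N ∑_{m≠n} ⟨w_m − w_n, h_n^{(k)}⟩. Then P ≥ −(1/√(K(N−1))) ‖W‖ ‖H‖, where ‖W‖² = ∑_n ‖w_n‖² and ‖H‖² = ∑_{k,n} ‖h_n^{(k)}‖². -/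
open scoped RealInnerProductSpace
open Finset

private lemma aux_cs {ι : Type*} [Fintype ι] (f g : ι → ℝ) (hf : ∀ p, 0 ≤ f p)
    (hg : ∀ p, 0 ≤ g p) (A B : ℝ) (hA : ∑ p, f p ^ 2 ≤ A) (hB : ∑ p, g p ^ 2 ≤ B) :
    ∑ p, f p * g p ≤ Real.sqrt A * Real.sqrt B := by
  have hnn : (0:ℝ) ≤ ∑ p, f p * g p :=
    Finset.sum_nonneg fun p _ => mul_nonneg (hf p) (hg p)
  have hCS := Finset.sum_mul_sq_le_sq_mul_sq Finset.univ f g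
  rw [← Real.sqrt_mul (le_trans (by positivity) hA), ← Real.sqrt_sq hnn]
  apply Real.sqrt_le_sqrt
  refine hCS.trans ?_
  exact mul_le_mul hA hB (by positivity) (le_trans (by positivity) hA)

set_option maxHeartbeats 1000000 in
/-- Lemma B.1: Cauchy–Schwarz lower bound on the bilinear term `P` for nonnegative
features. -/
theorem stmt3 {M : ℕ} (K N : ℕ) (hK : 1 ≤ K) (hN : 2 ≤ N)
    (w : Fin N → EuclideanSpace ℝ (Fin M))
    (h : Fin N → Fin K → EuclideanSpace ℝ (Fin M))
    (hpos : ∀ n k i, 0 ≤ h n k i) :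
    ((K : ℝ) * N * ((N : ℝ) - 1))⁻¹ *
        (∑ k : Fin K, ∑ n : Fin N, ∑ m ∈ univ.filter (fun m => m ≠ n),
          ⟪w m - w n, h n k⟫)
      ≥ -(1 / Real.sqrt ((K : ℝ) * ((N : ℝ) - 1))) *
          Real.sqrt (∑ n : Fin N, ‖w n‖ ^ 2) *
          Real.sqrt (∑ k : Fin K, ∑ n : Fin N, ‖h n k‖ ^ 2) := by
  have hKR : (1:ℝ) ≤ (K:ℝ) := by exact_mod_cast hK
  have hNR : (2:ℝ) ≤ (N:ℝ) := by exact_mod_cast hN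
  have hK0 : (0:ℝ) < K := by linarith
  have hN0 : (0:ℝ) < N := by linarith
  have hN1 : (1:ℝ) ≤ (N:ℝ) - 1 := by linarith
  have hN1' : (0:ℝ) < (N:ℝ) - 1 := by linarith
  set s : EuclideanSpace ℝ (Fin M) := ∑ m, w m with hs
  set v : Fin N → EuclideanSpace ℝ (Fin M) := fun n => s - (N:ℝ) • w n with hv
  set W2 : ℝ := ∑ n : Fin N, ‖w n‖ ^ 2 with hW2
  set H2 : ℝ := ∑ k : Fin K, ∑ n : Fin N, ‖h n k‖ ^ 2 with hH2
  -- Step 1: rewrite the inner filtered sum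
  have hinner : ∀ (k : Fin K) (n : Fin N),
      ∑ m ∈ univ.filter (fun m => m ≠ n), ⟪w m - w n, h n k⟫ = ⟪v n, h n k⟫ := by
    intro k n
    rw [← sum_inner]
    congr 1
    rw [Finset.filter_ne', Finset.sum_sub_distrib, Finset.sum_erase_eq_sub (Finset.mem_univ n),
      Finset.sum_const, Finset.card_erase_of_mem (Finset.mem_univ n), Finset.card_univ,
      Fintype.card_fin, ← Nat.cast_smul_eq_nsmul ℝ]
    push_cast [Nat.cast_sub (by omega : 1 ≤ N)]
    simp only [hv, ← hs]
    module
  -- Step 2: bound ∑ ‖v n‖²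
  have hvb : ∑ n : Fin N, ‖v n‖ ^ 2 ≤ (N:ℝ) ^ 2 * W2 := by
    have expand : ∀ n : Fin N,
        ‖v n‖ ^ 2 = ‖s‖ ^ 2 - 2 * (N:ℝ) * ⟪s, w n⟫ + (N:ℝ) ^ 2 * ‖w n‖ ^ 2 := by
      intro n
      simp only [hv]
      rw [norm_sub_sq_real, real_inner_smul_right, norm_smul]
      simp [Real.norm_natCast]
      ring
    rw [Finset.sum_congr rfl (fun n _ => expand n)]
    rw [Finset.sum_add_distrib, Finset.sum_sub_distrib, Finset.sum_const, ← Finset.mul_sum,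
      ← Finset.mul_sum, ← inner_sum, ← hs, real_inner_self_eq_norm_sq, Finset.card_univ,
      Fintype.card_fin, ← hW2]
    simp only [nsmul_eq_mul]
    have hs2 : (0:ℝ) ≤ ‖s‖ ^ 2 := by positivity
    nlinarith [mul_nonneg hN0.le hs2]
  -- Step 3: Cauchy–Schwarz lower bound on the sum
  have hS : -(Real.sqrt ((K:ℝ) * ((N:ℝ)^2 * W2)) * Real.sqrt H2)
      ≤ ∑ k : Fin K, ∑ n : Fin N, ⟪v n, h n k⟫ := by
    have step1 : -(∑ k : Fin K, ∑ n : Fin N, ‖v n‖ * ‖h n k‖)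
        ≤ ∑ k : Fin K, ∑ n : Fin N, ⟪v n, h n k⟫ := by
      rw [neg_le]
      calc -(∑ k : Fin K, ∑ n : Fin N, ⟪v n, h n k⟫)
          = ∑ k : Fin K, ∑ n : Fin N, -⟪v n, h n k⟫ := by
            simp [Finset.sum_neg_distrib]
        _ ≤ ∑ k : Fin K, ∑ n : Fin N, ‖v n‖ * ‖h n k‖ := by
            apply Finset.sum_le_sum; intro k _
            apply Finset.sum_le_sum; intro n _
            have := abs_real_inner_le_norm (v n) (h n k)
            exact neg_le_of_neg_le (by nlinarith [abs_nonneg ⟪v n, h n k⟫, neg_abs_le ⟪v n, h n k⟫])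
    have step2 : ∑ k : Fin K, ∑ n : Fin N, ‖v n‖ * ‖h n k‖
        ≤ Real.sqrt ((K:ℝ) * ((N:ℝ)^2 * W2)) * Real.sqrt H2 := by
      have hflat : ∑ k : Fin K, ∑ n : Fin N, ‖v n‖ * ‖h n k‖
          = ∑ p : Fin K × Fin N, ‖v p.2‖ * ‖h p.2 p.1‖ := by
        rw [Fintype.sum_prod_type]
      have hf2 : ∑ p : Fin K × Fin N, ‖v p.2‖ ^ 2 ≤ (K:ℝ) * ((N:ℝ)^2 * W2) := by
        rw [Fintype.sum_prod_type]
        simp only [Finset.sum_const, Finset.card_univ, Fintype.card_fin, nsmul_eq_mul]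
        exact mul_le_mul_of_nonneg_left hvb hK0.le
      have hg2 : ∑ p : Fin K × Fin N, ‖h p.2 p.1‖ ^ 2 ≤ H2 := by
        rw [Fintype.sum_prod_type, hH2]
      rw [hflat]
      exact aux_cs _ _ (fun p => norm_nonneg _) (fun p => norm_nonneg _) _ _ hf2 hg2
    linarith
  -- Step 4: final arithmetic
  simp only [hinner]
  rw [ge_iff_le]
  set a : ℝ := Real.sqrt K with ha
  set b : ℝ := Real.sqrt ((N:ℝ) - 1) with hb
  have ha2 : a ^ 2 = (K:ℝ) := Real.sq_sqrt hK0.le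
  have hb2 : b ^ 2 = (N:ℝ) - 1 := Real.sq_sqrt hN1'.le
  have ha1 : 1 ≤ a := Real.one_le_sqrt.mpr hKR
  have hb1 : 1 ≤ b := Real.one_le_sqrt.mpr hN1
  have hab : Real.sqrt ((K:ℝ) * ((N:ℝ) - 1)) = a * b := Real.sqrt_mul hK0.le _
  have hbig : Real.sqrt ((K:ℝ) * ((N:ℝ)^2 * W2)) = a * ((N:ℝ) * Real.sqrt W2) := by
    rw [Real.sqrt_mul hK0.le, Real.sqrt_mul (by positivity), Real.sqrt_sq hN0.le]
  have hX : (0:ℝ) ≤ Real.sqrt W2 * Real.sqrt H2 := mul_nonneg (Real.sqrt_nonneg _) (Real.sqrt_nonneg _)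
  have ha0 : (0:ℝ) < a := by linarith
  have hb0 : (0:ℝ) < b := by linarith
  have hcpos : (0:ℝ) < (K:ℝ) * N * ((N:ℝ) - 1) := by positivity
  have key : ((K:ℝ) * N * ((N:ℝ) - 1))⁻¹ * (-(Real.sqrt ((K:ℝ) * ((N:ℝ)^2 * W2)) * Real.sqrt H2))
      ≤ ((K:ℝ) * N * ((N:ℝ) - 1))⁻¹ * (∑ k : Fin K, ∑ n : Fin N, ⟪v n, h n k⟫) :=
    mul_le_mul_of_nonneg_left hS (inv_nonneg.mpr hcpos.le)
  refine le_trans ?_ key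
  rw [hbig, hab, ← ha2, ← hb2]
  have lhs_eq : -(1 / (a * b)) * Real.sqrt W2 * Real.sqrt H2
      = -(Real.sqrt W2 * Real.sqrt H2 / (a * b)) := by ring
  have rhs_eq : ((a^2:ℝ) * N * (b^2))⁻¹ * (-(a * ((N:ℝ) * Real.sqrt W2) * Real.sqrt H2))
      = -(Real.sqrt W2 * Real.sqrt H2 / (a * b^2)) := by
    field_simp
  rw [lhs_eq, rhs_eq, neg_le_neg_iff]
  apply div_le_div_of_nonneg_left hX (by positivity)
  have hh : a * b * 1 ≤ a * b * b := mul_le_mul_of_nonneg_left hb1 (mul_nonneg ha0.le hb0.le)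
  nlinarith [hh]
end
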